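/- Let $\mathbb{C}_v$ be a complete algebraically closed non-archimedean field, and let $f \in \mathbb{C}_v[z]$ be monic of degree $d \geq 2$ with bad reduction and splitting radius $g_v > 0$; suppose the residue characteristic is $0$ or greater than $d$ and suppose additionally $f(z)$ has constant term of valuation $\geq 0$ and lowest-degree term of degree $\geq 2$ (so $0 \in \mathcal{K}_v$). Then every disk component $\mathcal{B}$ of $f^{-1}(\{z : \log|z|_v \leq g_v\})$ has radius at most $1$, i.e., $|z - z'|_v \leq 1$ for all $z, z'$ in the same disk component. -/

import Mathlib

/-!
Suppose `‖z' - z‖ = r > 1`. Where `‖x‖` exceeds `1` and the norms of all roots,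
`‖f x‖ = ‖x‖ ^ d`, so such `x` escape; minimality of `g_v` then forces a root `ζ` with
`‖ζ‖ ≥ exp g_v`. As `‖k‖ = 1` for `1 ≤ k ≤ d`, the `d + 1` points `z + m (z' - z)`, `m ≤ d`,
are pairwise at distance `r`, so one of them, `w`, is at distance `≥ r` from all of the at most
`d` roots. Since `0` is also a root, `‖f w‖ = ∏ ‖w - a‖ ≥ ‖w‖ ‖w - ζ‖ ≥ r ‖ζ‖ > exp g_v`,
although `w` lies in the disk of radius `r` about `z`.
-/

open Polynomial

section Ultrametric

variable {K : Type*} [NormedField K]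

theorem norm_natCast_eq_one_of_le {n : ℕ} (hres : ∀ p : ℕ, p.Prime → p ≤ n → ‖(p : K)‖ = 1)
    {k : ℕ} (hk : k ≠ 0) (hkn : k ≤ n) : ‖(k : K)‖ = 1 := by
  induction k using Nat.recOnMul with
  | zero => exact absurd rfl hk
  | one => simp
  | prime p hp => exact hres p hp hkn
  | mul a b iha ihb =>
    obtain ⟨ha, hb⟩ := mul_ne_zero_iff.mp hk
    have hakn : a ≤ n := (Nat.le_mul_of_pos_right a (Nat.pos_of_ne_zero hb)).trans hkn
    have hbkn : b ≤ n := (Nat.le_mul_of_pos_left b (Nat.pos_of_ne_zero ha)).trans hkn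
    rw [Nat.cast_mul, norm_mul, iha ha hakn, ihb hb hbkn, one_mul]

theorem norm_natCast_sub_natCast_eq_one {n : ℕ}
    (hres : ∀ p : ℕ, p.Prime → p ≤ n → ‖(p : K)‖ = 1) {m m' : ℕ} (hne : m ≠ m')
    (hm : m ≤ n) (hm' : m' ≤ n) : ‖(m : K) - m'‖ = 1 := by
  wlog hlt : m' < m generalizing m m'
  · rw [norm_sub_rev]
    exact this hne.symm hm' hm (by omega)
  rw [← Nat.cast_sub hlt.le]
  exact norm_natCast_eq_one_of_le hres (by omega) (by omega)

variable [IsUltrametricDist K]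

/-- The points `c + m * u`, `m = 0, …, n`, are pairwise at distance `‖u‖`, so each point of `T`
is at distance `< ‖u‖` from at most one of them. -/
theorem exists_forall_norm_le_norm_add_natCast_mul_sub {n : ℕ}
    (hres : ∀ p : ℕ, p.Prime → p ≤ n → ‖(p : K)‖ = 1) (c u : K) {T : Finset K}
    (hT : T.card ≤ n) : ∃ m ≤ n, ∀ a ∈ T, ‖u‖ ≤ ‖c + m * u - a‖ := by
  by_contra! h
  choose! g hgT hg using h
  obtain ⟨m, hm, m', hm', hne, heq⟩ := Finset.exists_ne_map_eq_of_card_lt_of_maps_to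
    (s := Finset.range (n + 1)) (by simpa using Nat.lt_succ_of_le hT)
    (fun m hm => hgT m (Nat.lt_succ_iff.mp (Finset.mem_range.mp hm)))
  rw [Finset.mem_range, Nat.lt_succ_iff] at hm hm'
  have hlt : ‖((m : K) - m') * u‖ < ‖u‖ := by
    have hdiff : ((m : K) - m') * u = (c + m * u - g m) + -(c + m' * u - g m') := by
      rw [heq]; ring
    rw [hdiff]
    refine (IsUltrametricDist.norm_add_le_max _ _).trans_lt ?_
    rw [norm_neg]
    exact max_lt (hg m hm) (hg m' hm')
  rw [norm_mul, norm_natCast_sub_natCast_eq_one hres hne hm hm', one_mul] at hlt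
  exact lt_irrefl _ hlt

end Ultrametric

namespace Polynomial.Monic

variable {K : Type*} [NormedField K] {f : K[X]}

theorem norm_eval_eq_prod_roots (hm : f.Monic) (hf : f.Splits) (x : K) :
    ‖f.eval x‖ = (f.roots.map fun a => ‖x - a‖).prod := by
  rw [hf.eval_eq_prod_roots_of_monic hm, ← normHom_apply, map_multiset_prod, Multiset.map_map]
  rfl

variable [IsUltrametricDist K]

theorem norm_eval_eq_pow_natDegree (hm : f.Monic) (hf : f.Splits) {x : K}
    (hx : ∀ a ∈ f.roots, ‖a‖ < ‖x‖) : ‖f.eval x‖ = ‖x‖ ^ f.natDegree := by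
  have hfactor : ∀ a ∈ f.roots, ‖x - a‖ = ‖x‖ := fun a ha => by
    have := IsUltrametricDist.norm_sub_eq_max_of_norm_sub_ne_norm_sub x 0 a
      (by simpa using (hx a ha).ne')
    rwa [sub_zero, zero_sub, norm_neg, max_eq_left (hx a ha).le] at this
  rw [hm.norm_eval_eq_prod_roots hf, Multiset.map_congr rfl hfactor, Multiset.map_const',
    Multiset.prod_replicate, ← splits_iff_card_roots.mp hf]

theorem norm_le_of_bounded_orbit (hm : f.Monic) (hf : f.Splits) (hdeg : 2 ≤ f.natDegree)
    {R : ℝ} (hR : 1 ≤ R) (hroots : ∀ a ∈ f.roots, ‖a‖ ≤ R) {y : K}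
    (hy : ∃ M : ℝ, ∀ n : ℕ, ‖(fun w => f.eval w)^[n] y‖ ≤ M) : ‖y‖ ≤ R := by
  by_contra! hyR
  obtain ⟨M, hM⟩ := hy
  have hstep : ∀ x : K, ‖y‖ ≤ ‖x‖ → ‖y‖ * ‖x‖ ≤ ‖f.eval x‖ := fun x hx => by
    have hx1 : 1 ≤ ‖x‖ := by linarith
    rw [hm.norm_eval_eq_pow_natDegree hf fun a ha => (hroots a ha).trans_lt (hyR.trans_le hx)]
    calc ‖y‖ * ‖x‖ ≤ ‖x‖ ^ 2 := by nlinarith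
      _ ≤ ‖x‖ ^ f.natDegree := pow_le_pow_right₀ hx1 hdeg
  have hgrowth : ∀ n : ℕ, ‖y‖ ^ (n + 1) ≤ ‖(fun w => f.eval w)^[n] y‖ := fun n => by
    induction n with
    | zero => simp
    | succ n ih =>
      rw [Function.iterate_succ_apply', pow_succ']
      refine (mul_le_mul_of_nonneg_left ih (norm_nonneg y)).trans (hstep _ ?_)
      exact (le_self_pow₀ (by linarith) n.succ_ne_zero).trans ih
  obtain ⟨n, hn⟩ := pow_unbounded_of_one_lt M (by linarith : 1 < ‖y‖)
  have : ‖y‖ ^ n ≤ ‖y‖ ^ (n + 1) := pow_le_pow_right₀ (by linarith) n.le_succ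
  linarith [hgrowth n, hM n]

theorem exists_mem_roots_exp_le_norm (hm : f.Monic) (hf : f.Splits) (hdeg : 2 ≤ f.natDegree)
    {g : ℝ} (hg : 0 < g) (hK : g ∈ lowerBounds {s : ℝ | ∀ z : K,
      (∃ M : ℝ, ∀ n : ℕ, ‖(fun w => f.eval w)^[n] z‖ ≤ M) → ‖z‖ ≤ Real.exp s}) :
    ∃ ζ ∈ f.roots, Real.exp g ≤ ‖ζ‖ := by
  have hroots : f.roots ≠ 0 := by
    rw [← Multiset.card_pos, splits_iff_card_roots.mp hf]; omega
  obtain ⟨ζ, hζ, hmax⟩ := Multiset.exists_max_image (‖·‖) hroots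
  have hR : 0 < max 1 ‖ζ‖ := lt_max_of_lt_left one_pos
  have hgR : Real.exp g ≤ max 1 ‖ζ‖ := by
    rw [← Real.exp_log hR, Real.exp_le_exp]
    refine hK fun y hy => ?_
    rw [Real.exp_log hR]
    exact hm.norm_le_of_bounded_orbit hf hdeg (le_max_left _ _)
      (fun a ha => (hmax a ha).trans (le_max_right _ _)) hy
  refine ⟨ζ, hζ, (le_max_iff.mp hgR).resolve_left ?_⟩
  simpa using hg

theorem mul_norm_sub_le_norm_eval (hm : f.Monic) (hf : f.Splits) {a b : K} (hab : a ≠ b)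
    (ha : a ∈ f.roots) (hb : b ∈ f.roots) {r : ℝ} (hr : 1 ≤ r) {w : K}
    (hw : ∀ c ∈ f.roots, r ≤ ‖w - c‖) : r * ‖a - b‖ ≤ ‖f.eval w‖ := by
  classical
  obtain ⟨s, hs⟩ := Multiset.exists_cons_of_mem (Multiset.mem_erase_of_ne hab.symm |>.mpr hb)
  have hroots : f.roots = a ::ₘ b ::ₘ s := by rw [← hs, Multiset.cons_erase ha]
  have hrest : 1 ≤ (s.map fun c => ‖w - c‖).prod :=
    Multiset.one_le_prod_map fun c hc => hr.trans (hw c (by simp [hroots, hc]))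
  have hwa := hw a ha
  have hwb := hw b hb
  have hab_le : ‖a - b‖ ≤ max ‖w - a‖ ‖w - b‖ := by
    rw [← norm_neg (w - a)]
    simpa using IsUltrametricDist.norm_add_le_max (-(w - a)) (w - b)
  rw [hm.norm_eval_eq_prod_roots hf, hroots, Multiset.map_cons, Multiset.map_cons,
    Multiset.prod_cons, Multiset.prod_cons, ← mul_assoc]
  have hpair : r * ‖a - b‖ ≤ ‖w - a‖ * ‖w - b‖ := by
    rcases le_max_iff.mp hab_le with h | h <;> nlinarith [norm_nonneg (a - b)]
  exact hpair.trans (le_mul_of_one_le_right (by positivity) hrest)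

end Polynomial.Monic

theorem stmt17_general (Cv : Type*) [NormedField Cv] [IsAlgClosed Cv]
    [IsUltrametricDist Cv]
    (f : Polynomial Cv) (d : ℕ) (hd : 2 ≤ d) (hmonic : f.Monic) (hdeg : f.natDegree = d)
    (hres : ∀ p : ℕ, p.Prime → p ≤ d → ‖(p : Cv)‖ = 1)
    (h0 : f.coeff 0 = 0)
    (gv : ℝ) (hgv : 0 < gv)
    (hK : IsLeast {s : ℝ | ∀ z : Cv,
      (∃ M : ℝ, ∀ n : ℕ, ‖(fun w => f.eval w)^[n] z‖ ≤ M) → ‖z‖ ≤ Real.exp s} gv) :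
    ∀ z z' : Cv, ‖f.eval z‖ ≤ Real.exp gv →
      (∀ w : Cv, ‖w - z‖ ≤ ‖z' - z‖ → ‖f.eval w‖ ≤ Real.exp gv) →
      ‖z - z'‖ ≤ 1 := by
  classical
  intro z z' _ hdisk
  by_contra! hr
  rw [norm_sub_rev] at hr
  have hsplits : f.Splits := IsAlgClosed.splits f
  obtain ⟨ζ, hζ, hEζ⟩ := hmonic.exists_mem_roots_exp_le_norm hsplits (hdeg ▸ hd) hgv hK.2
  have hζpos : 0 < ‖ζ‖ := (Real.exp_pos gv).trans_le hEζ
  have h0root : (0 : Cv) ∈ f.roots := by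
    rwa [mem_roots hmonic.ne_zero, IsRoot, ← coeff_zero_eq_eval_zero]
  have hcard : f.roots.toFinset.card ≤ d :=
    (Multiset.toFinset_card_le _).trans (hdeg ▸ card_roots' f)
  obtain ⟨m, -, hfar⟩ := exists_forall_norm_le_norm_add_natCast_mul_sub hres z (z' - z) hcard
  have hwz : ‖z + m * (z' - z) - z‖ ≤ ‖z' - z‖ := by
    rw [add_sub_cancel_left, norm_mul]
    exact mul_le_of_le_one_left (norm_nonneg _) (IsUltrametricDist.norm_natCast_le_one Cv m)
  have hlower := hmonic.mul_norm_sub_le_norm_eval hsplits (norm_pos_iff.mp hζpos) hζ h0root hr.le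
    fun c hc => hfar c (Multiset.mem_toFinset.mpr hc)
  rw [sub_zero] at hlower
  linarith [hdisk _ hwz, lt_mul_of_one_lt_left hζpos hr]

/-- For a monic polynomial `f` of degree `d ≥ 2` over a complete algebraically closed
non-archimedean field of residue characteristic `0` or `> d`, with bad reduction and
splitting radius `g_v > 0` (the logarithmic radius of the smallest disk about `0` containing
the filled Julia set), and with lowest-degree term of degree at least `2` (so `0` lies in
the filled Julia set), every disk component of `f⁻¹({z : log|z| ≤ g_v})` has radius at most
`1`: two points of the preimage lying in a common disk inside the preimage are at distance
at most `1`. -/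
theorem stmt17 (Cv : Type*) [NormedField Cv] [CompleteSpace Cv] [IsAlgClosed Cv]
    [IsUltrametricDist Cv] (hnt : ∃ x : Cv, 1 < ‖x‖)
    (f : Polynomial Cv) (d : ℕ) (hd : 2 ≤ d) (hmonic : f.Monic) (hdeg : f.natDegree = d)
    (hres : ∀ p : ℕ, p.Prime → p ≤ d → ‖(p : Cv)‖ = 1)
    (h0 : f.coeff 0 = 0) (h1 : f.coeff 1 = 0)
    (gv : ℝ) (hgv : 0 < gv)
    (hK : IsLeast {s : ℝ | ∀ z : Cv,
      (∃ M : ℝ, ∀ n : ℕ, ‖(fun w => f.eval w)^[n] z‖ ≤ M) → ‖z‖ ≤ Real.exp s} gv) :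
    ∀ z z' : Cv, ‖f.eval z‖ ≤ Real.exp gv →
      (∀ w : Cv, ‖w - z‖ ≤ ‖z' - z‖ → ‖f.eval w‖ ≤ Real.exp gv) →
      ‖z - z'‖ ≤ 1 :=
  stmt17_general Cv f d hd hmonic hdeg hres h0 gv hgv hK
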